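/- Fix an integer b ≥ 2 and a real number η with 0 < η < 1. There exists a constant K > 0 (depending only on b and η) such that for all real u ≥ 1, the sum ∑ 1/ord_ℓ(b), taken over all primes ℓ ≤ u with ℓ ∤ b and ord_ℓ(b) < ℓ^η, is at most K·u^η. -/

import Mathlib

/-!
A prime `ℓ` with `ord_ℓ(b) = d` divides `b ^ d - 1 < 2 ^ (b * d)`, so there are fewer than `b * d`
of them and together they contribute less than `b` to the sum. Only the orders
`d ≤ u ^ η` occur, whence the bound `b * u ^ η`.
-/

open Finset

namespace Nat

theorem two_pow_card_primeFactors_le {n : ℕ} (hn : n ≠ 0) : 2 ^ #n.primeFactors ≤ n :=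
  calc 2 ^ #n.primeFactors ≤ ∏ p ∈ n.primeFactors, p :=
        pow_card_le_prod _ _ _ fun _ hp => (prime_of_mem_primeFactors hp).two_le
    _ ≤ n := le_of_dvd (pos_of_ne_zero hn) (prod_primeFactors_dvd n)

theorem card_primeFactors_pow_sub_one_lt {b d : ℕ} (hb : 2 ≤ b) (hd : 0 < d) :
    #(b ^ d - 1).primeFactors < b * d := by
  have hbd : 2 ≤ b ^ d := hb.trans (le_self_pow hd.ne' b)
  refine (Nat.pow_lt_pow_iff_right (by norm_num : 1 < 2)).1 ?_
  calc 2 ^ #(b ^ d - 1).primeFactors ≤ b ^ d - 1 := two_pow_card_primeFactors_le (by omega)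
    _ < b ^ d := by omega
    _ ≤ (2 ^ b) ^ d := Nat.pow_le_pow_left Nat.lt_two_pow_self.le d
    _ = 2 ^ (b * d) := (pow_mul 2 b d).symm

end Nat

theorem dvd_pow_orderOf_natCast_sub_one (b ℓ : ℕ) : ℓ ∣ b ^ orderOf (b : ZMod ℓ) - 1 := by
  rcases Nat.eq_zero_or_pos (b ^ orderOf (b : ZMod ℓ)) with h | h
  · simp [h]
  · exact (Nat.modEq_iff_dvd' h).1 <| (ZMod.natCast_eq_natCast_iff _ _ _).1 <| by
      simp [pow_orderOf_eq_one]

theorem orderOf_natCast_pos {b ℓ : ℕ} (hℓ : ℓ.Prime) (hb : ¬ℓ ∣ b) :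
    0 < orderOf (b : ZMod ℓ) := by
  have : Fact ℓ.Prime := ⟨hℓ⟩
  have hb0 : (b : ZMod ℓ) ≠ 0 := by rwa [Ne, ZMod.natCast_eq_zero_iff]
  exact Nat.pos_of_dvd_of_pos (ZMod.orderOf_dvd_card_sub_one hb0) (by have := hℓ.two_le; omega)

theorem card_filter_orderOf_natCast_eq_lt {b d : ℕ} (hb : 2 ≤ b) (hd : 0 < d) (s : Finset ℕ)
    (hs : ∀ ℓ ∈ s, ℓ.Prime) : #{ℓ ∈ s | orderOf (b : ZMod ℓ) = d} < b * d := by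
  refine lt_of_le_of_lt (card_le_card fun ℓ hℓ => ?_) (Nat.card_primeFactors_pow_sub_one_lt hb hd)
  obtain ⟨hℓs, rfl⟩ := mem_filter.1 hℓ
  have hbd : 2 ≤ b ^ orderOf (b : ZMod ℓ) := hb.trans (Nat.le_self_pow hd.ne' b)
  exact Nat.mem_primeFactors.2 ⟨hs ℓ hℓs, dvd_pow_orderOf_natCast_sub_one b ℓ, by omega⟩

theorem sum_inv_orderOf_natCast_le {b D : ℕ} (hb : 2 ≤ b) (s : Finset ℕ)
    (hs : ∀ ℓ ∈ s, ℓ.Prime ∧ ¬ℓ ∣ b ∧ orderOf (b : ZMod ℓ) ≤ D) :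
    ∑ ℓ ∈ s, (1 : ℝ) / orderOf (b : ZMod ℓ) ≤ b * D := by
  have hmaps : ∀ ℓ ∈ s, orderOf (b : ZMod ℓ) ∈ Icc 1 D := fun ℓ hℓ =>
    mem_Icc.2 ⟨orderOf_natCast_pos (hs ℓ hℓ).1 (hs ℓ hℓ).2.1, (hs ℓ hℓ).2.2⟩
  have hfiber : ∀ d ∈ Icc 1 D,
      ∑ ℓ ∈ s with orderOf (b : ZMod ℓ) = d, (1 : ℝ) / orderOf (b : ZMod ℓ) ≤ b := by
    intro d hd
    have hd0 : 0 < d := (mem_Icc.1 hd).1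
    have hcard := card_filter_orderOf_natCast_eq_lt hb hd0 s fun ℓ hℓ => (hs ℓ hℓ).1
    calc ∑ ℓ ∈ s with orderOf (b : ZMod ℓ) = d, (1 : ℝ) / orderOf (b : ZMod ℓ)
        = #{ℓ ∈ s | orderOf (b : ZMod ℓ) = d} / d := by
          rw [sum_congr rfl fun ℓ hℓ => by rw [(mem_filter.1 hℓ).2], sum_const, nsmul_eq_mul,
            mul_one_div]
      _ ≤ (b * d : ℕ) / d := by gcongr
      _ = b := by push_cast; field_simp
  calc ∑ ℓ ∈ s, (1 : ℝ) / orderOf (b : ZMod ℓ)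
      = ∑ d ∈ Icc 1 D, ∑ ℓ ∈ s with orderOf (b : ZMod ℓ) = d, (1 : ℝ) / orderOf (b : ZMod ℓ) :=
        (sum_fiberwise_of_maps_to hmaps _).symm
    _ ≤ #(Icc 1 D) • (b : ℝ) := sum_le_card_nsmul _ _ _ hfiber
    _ = b * D := by simp [mul_comm]

theorem stmt3_general (b : ℕ) (hb : 2 ≤ b) (η : ℝ) (hη0 : 0 < η) :
    ∃ K : ℝ, 0 < K ∧ ∀ u : ℝ, 1 ≤ u →
      ∑' ℓ : {ℓ : ℕ // ℓ.Prime ∧ ¬ℓ ∣ b ∧ ((ℓ : ℕ) : ℝ) ≤ u ∧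
          (orderOf ((b : ZMod (ℓ : ℕ))) : ℝ) < ((ℓ : ℕ) : ℝ) ^ η},
        (1 : ℝ) / (orderOf ((b : ZMod (ℓ : ℕ))) : ℝ)
      ≤ K * u ^ η := by
  refine ⟨b, by positivity, fun u hu => tsum_le_of_sum_le' (by positivity) fun t => ?_⟩
  have hord : ∀ ℓ ∈ t.map (Function.Embedding.subtype _),
      ℓ.Prime ∧ ¬ℓ ∣ b ∧ orderOf (b : ZMod ℓ) ≤ ⌊u ^ η⌋₊ := by
    simp only [mem_map, Function.Embedding.coe_subtype]
    rintro _ ⟨⟨ℓ, hℓ, hℓb, hℓu, hℓη⟩, -, rfl⟩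
    refine ⟨hℓ, hℓb, Nat.le_floor (hℓη.le.trans ?_)⟩
    exact Real.rpow_le_rpow (by positivity) hℓu hη0.le
  calc ∑ ℓ ∈ t, (1 : ℝ) / orderOf (b : ZMod ℓ)
      = ∑ ℓ ∈ t.map (Function.Embedding.subtype _), (1 : ℝ) / orderOf (b : ZMod ℓ) :=
        by rw [sum_map]; rfl
    _ ≤ b * ⌊u ^ η⌋₊ := sum_inv_orderOf_natCast_le hb _ hord
    _ ≤ b * u ^ η := by gcongr; exact Nat.floor_le (by positivity)

/-- Fix an integer `b ≥ 2` and real `0 < η < 1`. There is `K > 0` (depending only on `b, η`)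
such that for all real `u ≥ 1`, the sum `∑ 1/ord_ℓ(b)` over primes `ℓ ≤ u` with `ℓ ∤ b` and
`ord_ℓ(b) < ℓ^η` is at most `K · u^η`. -/
theorem stmt3 (b : ℕ) (hb : 2 ≤ b) (η : ℝ) (hη0 : 0 < η) (hη1 : η < 1) :
    ∃ K : ℝ, 0 < K ∧ ∀ u : ℝ, 1 ≤ u →
      ∑' ℓ : {ℓ : ℕ // ℓ.Prime ∧ ¬ℓ ∣ b ∧ ((ℓ : ℕ) : ℝ) ≤ u ∧
          (orderOf ((b : ZMod (ℓ : ℕ))) : ℝ) < ((ℓ : ℕ) : ℝ) ^ η},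
        (1 : ℝ) / (orderOf ((b : ZMod (ℓ : ℕ))) : ℝ)
      ≤ K * u ^ η :=
  stmt3_general b hb η hη0
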